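/- Let s, t > 0. Define u(r, ε) = ε^{-2} (1/√2) · r² · (J₀)^{1/2}/J₁ evaluated with R determined by r² = R^{-2s} J₁/J₂ (mildly ill-posed extremal problem). Then u(r,ε) ≍ ε^{-2} r^{(2s+2t+1/2)/s} · r as r → 0; consequently u(r_ε, ε) = O(1) as ε → 0 if and only if r_ε = O(ε^{2s/(2s+2t+1/2)}). -/
import Mathlib

open scoped BigOperators
set_option maxHeartbeats 1000000
lemma aux_lower (s t : ℝ) (hs : 0 < s) (ht : 0 < t) :
    ∃ c : ℝ, 0 < c ∧ ∀ r : ℝ, 0 < r → r < 1 → ∀ θ : ℕ → ℝ,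
      Summable (fun j : ℕ => (θ j)^2) →
      Summable (fun j : ℕ => ((j:ℝ)+1)^(2*s) * (θ j)^2) →
      (∑' j : ℕ, ((j:ℝ)+1)^(2*s) * (θ j)^2) ≤ 1 →
      r^2 ≤ (∑' j : ℕ, (θ j)^2) →
      c * r ^ ((4*s+4*t+1)/s) ≤ ∑' j : ℕ, ((j:ℝ)+1)^(-(4*t)) * (θ j)^4 := by
  set C₁ : ℝ := (2:ℝ)^(1/(2*s)) + 1 with hC₁
  have h2pow1 : (1:ℝ) ≤ (2:ℝ)^(1/(2*s)) := by
    apply Real.one_le_rpow (by norm_num) (by positivity)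
  have hC₁pos : 0 < C₁ := by positivity
  refine ⟨(4 * C₁ ^ (4*t+1))⁻¹, by positivity, ?_⟩
  intro r hr hr1 θ hsum2 hsumw hw1 hr2
  have hrinv1 : (1:ℝ) ≤ r^(-(1/s)) := by
    rw [Real.rpow_neg hr.le]
    rw [le_inv_comm₀ one_pos (by positivity)]
    simpa using Real.rpow_le_one hr.le hr1.le (by positivity)
  set A : ℝ := (2:ℝ)^(1/(2*s)) * r^(-(1/s)) with hA
  have hA1 : 1 ≤ A := by
    calc (1:ℝ) = 1 * 1 := by ring
    _ ≤ _ := by apply mul_le_mul h2pow1 hrinv1 one_pos.le (by positivity)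
  set N : ℕ := ⌈A⌉₊ with hN
  have hAN : A ≤ (N:ℝ) := Nat.le_ceil A
  have hN1 : (1:ℝ) ≤ (N:ℝ) := le_trans hA1 hAN
  have hNpos : (0:ℝ) < N := lt_of_lt_of_le one_pos hN1
  have hNle : (N:ℝ) ≤ C₁ * r^(-(1/s)) := by
    have := Nat.ceil_lt_add_one (le_trans one_pos.le hA1)
    have : (N:ℝ) ≤ A + 1 := this.le
    calc (N:ℝ) ≤ A + 1 := this
    _ ≤ (2:ℝ)^(1/(2*s)) * r^(-(1/s)) + 1 * r^(-(1/s)) := by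
        rw [one_mul]; exact add_le_add le_rfl hrinv1
    _ = C₁ * r^(-(1/s)) := by ring
  -- tail bound
  have hshift2 : Summable (fun i : ℕ => (θ (i + N))^2) :=
    (summable_nat_add_iff N).mpr hsum2
  have hshiftw : Summable (fun i : ℕ => ((↑(i+N):ℝ)+1)^(2*s) * (θ (i + N))^2) :=
    (summable_nat_add_iff N).mpr hsumw
  have htailw : (∑' i : ℕ, ((↑(i+N):ℝ)+1)^(2*s) * (θ (i + N))^2) ≤ 1 := by
    have key := Summable.sum_add_tsum_nat_add (f := fun j : ℕ => ((j:ℝ)+1)^(2*s) * (θ j)^2) N hsumw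
    have hnn : 0 ≤ ∑ j ∈ Finset.range N, ((j:ℝ)+1)^(2*s) * (θ j)^2 := by
      apply Finset.sum_nonneg; intro j _; positivity
    push_cast at key ⊢
    linarith
  have htail : (∑' i : ℕ, (θ (i + N))^2) ≤ (N:ℝ)^(-(2*s)) := by
    have hstep : ∀ i : ℕ, (θ (i + N))^2 ≤
        (N:ℝ)^(-(2*s)) * (((↑(i+N):ℝ)+1)^(2*s) * (θ (i + N))^2) := by
      intro i
      have hbase : (N:ℝ) ≤ (↑(i+N):ℝ) + 1 := by push_cast; linarith [Nat.cast_nonneg (α := ℝ) i]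
      have h1 : (N:ℝ)^(2*s) ≤ ((↑(i+N):ℝ)+1)^(2*s) :=
        Real.rpow_le_rpow hNpos.le hbase (by positivity)
      have h2 : (1:ℝ) ≤ (N:ℝ)^(-(2*s)) * ((↑(i+N):ℝ)+1)^(2*s) := by
        rw [Real.rpow_neg hNpos.le]
        rw [inv_mul_eq_div, le_div_iff₀ (by positivity)]
        simpa using h1
      calc (θ (i + N))^2 = 1 * (θ (i + N))^2 := by ring
      _ ≤ ((N:ℝ)^(-(2*s)) * ((↑(i+N):ℝ)+1)^(2*s)) * (θ (i + N))^2 := by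
          apply mul_le_mul_of_nonneg_right h2 (by positivity)
      _ = _ := by ring
    calc (∑' i : ℕ, (θ (i + N))^2)
        ≤ ∑' i : ℕ, (N:ℝ)^(-(2*s)) * (((↑(i+N):ℝ)+1)^(2*s) * (θ (i + N))^2) :=
          Summable.tsum_le_tsum hstep hshift2 (hshiftw.mul_left _)
      _ = (N:ℝ)^(-(2*s)) * ∑' i : ℕ, ((↑(i+N):ℝ)+1)^(2*s) * (θ (i + N))^2 := tsum_mul_left
      _ ≤ (N:ℝ)^(-(2*s)) * 1 := by
          apply mul_le_mul_of_nonneg_left htailw (by positivity)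
      _ = (N:ℝ)^(-(2*s)) := mul_one _
  have hNpow : (N:ℝ)^(-(2*s)) ≤ r^2 / 2 := by
    have e1 : ((2:ℝ)^(1/(2*s)))^(2*s) = 2 := by
      rw [← Real.rpow_mul (by norm_num : (0:ℝ) ≤ 2), one_div,
        inv_mul_cancel₀ (by positivity), Real.rpow_one]
    have e2 : (r^(-(1/s)))^(2*s) = r^(-(2:ℝ)) := by
      rw [← Real.rpow_mul hr.le]
      congr 1
      field_simp
    have hApow : A^(2*s) = 2 * r^(-(2:ℝ)) := by
      rw [hA, Real.mul_rpow (by positivity) (by positivity), e1, e2]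
    have h1 : A^(2*s) ≤ (N:ℝ)^(2*s) :=
      Real.rpow_le_rpow (by positivity) hAN (by positivity)
    rw [hApow] at h1
    rw [Real.rpow_neg hNpos.le, inv_le_comm₀ (by positivity) (by positivity)]
    calc (r^2/2)⁻¹ = 2 * r^(-(2:ℝ)) := by
          rw [Real.rpow_neg hr.le, Real.rpow_two]; field_simp
    _ ≤ (N:ℝ)^(2*s) := h1
  -- head bound
  have hhead : r^2/2 ≤ ∑ j ∈ Finset.range N, (θ j)^2 := by
    have key := Summable.sum_add_tsum_nat_add (f := fun j : ℕ => (θ j)^2) N hsum2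
    have : (∑' i : ℕ, (θ (i + N))^2) ≤ r^2/2 := le_trans htail hNpow
    linarith
  -- Cauchy-Schwarz
  have hCS : (∑ j ∈ Finset.range N, (θ j)^2)^2 ≤
      (∑ j ∈ Finset.range N, ((j:ℝ)+1)^(4*t)) *
      (∑ j ∈ Finset.range N, ((j:ℝ)+1)^(-(4*t)) * (θ j)^4) := by
    have := Finset.sum_mul_sq_le_sq_mul_sq (Finset.range N)
      (fun j => ((j:ℝ)+1)^(2*t)) (fun j => ((j:ℝ)+1)^(-(2*t)) * (θ j)^2)
    have e1 : ∀ j : ℕ, ((j:ℝ)+1)^(2*t) * (((j:ℝ)+1)^(-(2*t)) * (θ j)^2) = (θ j)^2 := by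
      intro j
      have hj : (0:ℝ) < (j:ℝ)+1 := by positivity
      rw [← mul_assoc, ← Real.rpow_add hj]
      norm_num
    have e2 : ∀ j : ℕ, (((j:ℝ)+1)^(2*t))^2 = ((j:ℝ)+1)^(4*t) := by
      intro j
      have hj : (0:ℝ) < (j:ℝ)+1 := by positivity
      rw [sq, ← Real.rpow_add hj]; ring_nf
    have e3 : ∀ j : ℕ, (((j:ℝ)+1)^(-(2*t)) * (θ j)^2)^2 = ((j:ℝ)+1)^(-(4*t)) * (θ j)^4 := by
      intro j
      have hj : (0:ℝ) < (j:ℝ)+1 := by positivity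
      have h4 : (((j:ℝ)+1)^(-(2*t)))^2 = ((j:ℝ)+1)^(-(4*t)) := by
        rw [sq, ← Real.rpow_add hj]; ring_nf
      rw [mul_pow, h4, ← pow_mul]
    simp only [e1, e2, e3] at this
    exact this
  -- sum of weights bound
  have hw : (∑ j ∈ Finset.range N, ((j:ℝ)+1)^(4*t)) ≤ (N:ℝ)^(4*t+1) := by
    calc (∑ j ∈ Finset.range N, ((j:ℝ)+1)^(4*t))
        ≤ ∑ _j ∈ Finset.range N, (N:ℝ)^(4*t) := by
          apply Finset.sum_le_sum
          intro j hj
          apply Real.rpow_le_rpow (by positivity) ?_ (by positivity)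
          have := Finset.mem_range.mp hj
          push_cast
          exact_mod_cast Nat.succ_le_of_lt this
      _ = (N:ℝ) * (N:ℝ)^(4*t) := by
          simp [Finset.sum_const, Finset.card_range, nsmul_eq_mul]
      _ = (N:ℝ)^(4*t+1) := by
          rw [Real.rpow_add hNpos, Real.rpow_one]; ring
  -- summability of quartic
  have hquartnn : ∀ j : ℕ, 0 ≤ ((j:ℝ)+1)^(-(4*t)) * (θ j)^4 := fun j => by positivity
  have hsumq : Summable (fun j : ℕ => ((j:ℝ)+1)^(-(4*t)) * (θ j)^4) := by
    refine Summable.of_nonneg_of_le hquartnn (fun j => ?_) (hsum2.mul_left (∑' k : ℕ, (θ k)^2))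
    ·
      have h1 : ((j:ℝ)+1)^(-(4*t)) ≤ 1 := by
        apply Real.rpow_le_one_of_one_le_of_nonpos (by push_cast; linarith [Nat.cast_nonneg (α := ℝ) j])
        linarith
      have h2 : (θ j)^2 ≤ ∑' k : ℕ, (θ k)^2 := Summable.le_tsum hsum2 j (fun k _ => sq_nonneg _)
      calc ((j:ℝ)+1)^(-(4*t)) * (θ j)^4 ≤ 1 * (θ j)^4 := by
            apply mul_le_mul_of_nonneg_right h1 (by positivity)
        _ = (θ j)^2 * (θ j)^2 := by ring
        _ ≤ (∑' k : ℕ, (θ k)^2) * (θ j)^2 := by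
            apply mul_le_mul_of_nonneg_right h2 (sq_nonneg _)
  have hfin_le : (∑ j ∈ Finset.range N, ((j:ℝ)+1)^(-(4*t)) * (θ j)^4) ≤
      ∑' j : ℕ, ((j:ℝ)+1)^(-(4*t)) * (θ j)^4 :=
    Summable.sum_le_tsum _ (fun j _ => hquartnn j) hsumq
  -- combine
  have hNbig : (N:ℝ)^(4*t+1) ≤ C₁^(4*t+1) * r^(-((4*t+1)/s)) := by
    calc (N:ℝ)^(4*t+1) ≤ (C₁ * r^(-(1/s)))^(4*t+1) :=
          Real.rpow_le_rpow hNpos.le hNle (by positivity)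
    _ = C₁^(4*t+1) * r^(-((4*t+1)/s)) := by
        rw [Real.mul_rpow hC₁pos.le (by positivity), ← Real.rpow_mul hr.le]
        congr 2
        field_simp
  have hQpos : 0 ≤ ∑' j : ℕ, ((j:ℝ)+1)^(-(4*t)) * (θ j)^4 := tsum_nonneg hquartnn
  have hkey : (r^2/2)^2 ≤ (C₁^(4*t+1) * r^(-((4*t+1)/s))) *
      (∑' j : ℕ, ((j:ℝ)+1)^(-(4*t)) * (θ j)^4) := by
    calc (r^2/2)^2 ≤ (∑ j ∈ Finset.range N, (θ j)^2)^2 := by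
          apply pow_le_pow_left₀ (by positivity) hhead
    _ ≤ (∑ j ∈ Finset.range N, ((j:ℝ)+1)^(4*t)) *
        (∑ j ∈ Finset.range N, ((j:ℝ)+1)^(-(4*t)) * (θ j)^4) := hCS
    _ ≤ (C₁^(4*t+1) * r^(-((4*t+1)/s))) *
        (∑' j : ℕ, ((j:ℝ)+1)^(-(4*t)) * (θ j)^4) := by
        apply mul_le_mul (le_trans hw hNbig) hfin_le
          (Finset.sum_nonneg fun j _ => hquartnn j) (by positivity)
  -- final algebra
  have hfact : (4 * C₁ ^ (4*t+1))⁻¹ * r ^ ((4*s+4*t+1)/s) =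
      (r^2/2)^2 / (C₁^(4*t+1) * r^(-((4*t+1)/s))) := by
    have e1 : r ^ ((4*s+4*t+1)/s) = r^(4:ℝ) * r^((4*t+1)/s) := by
      rw [← Real.rpow_add hr]
      congr 1
      field_simp
      ring
    have e2 : r^(-((4*t+1)/s)) = (r^((4*t+1)/s))⁻¹ := by
      rw [← Real.rpow_neg_one (r^((4*t+1)/s)), ← Real.rpow_mul hr.le]
      ring_nf
    have e3 : r^(4:ℝ) = r^4 := by
      rw [← Real.rpow_natCast r 4]
      norm_num
    rw [e1, e2, e3]
    have hrp : (0:ℝ) < r^((4*t+1)/s) := Real.rpow_pos_of_pos hr _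
    field_simp
    ring
  rw [hfact]
  rw [div_le_iff₀ (by positivity)]
  linarith [hkey]

lemma aux_upper (s t : ℝ) (hs : 0 < s) (ht : 0 < t) :
    ∃ C : ℝ, 0 < C ∧ ∀ r : ℝ, 0 < r → r < (4:ℝ)^(-s) → ∃ θ : ℕ → ℝ,
      Summable (fun j : ℕ => (θ j)^2) ∧
      Summable (fun j : ℕ => ((j:ℝ)+1)^(2*s) * (θ j)^2) ∧
      (∑' j : ℕ, ((j:ℝ)+1)^(2*s) * (θ j)^2) ≤ 1 ∧
      r^2 ≤ (∑' j : ℕ, (θ j)^2) ∧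
      (∑' j : ℕ, ((j:ℝ)+1)^(-(4*t)) * (θ j)^4) ≤ C * r ^ ((4*s+4*t+1)/s) := by
  refine ⟨(4:ℝ)^(4*t+1), by positivity, ?_⟩
  intro r hr hr4
  set B : ℝ := r^(-(1/s)) with hB
  have hBpos : 0 < B := Real.rpow_pos_of_pos hr _
  have hB4 : 4 < B := by
    have h1 : r^(1/s) < ((4:ℝ)^(-s))^(1/s) :=
      Real.rpow_lt_rpow hr.le hr4 (by positivity)
    have h2 : ((4:ℝ)^(-s))^(1/s) = 4⁻¹ := by
      rw [← Real.rpow_mul (by norm_num : (0:ℝ) ≤ 4)]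
      rw [show -s * (1/s) = -1 by field_simp]
      rw [Real.rpow_neg_one]
    have h3 : r^(1/s) < 4⁻¹ := h2 ▸ h1
    have h4 : B = (r^(1/s))⁻¹ := by
      rw [hB, ← Real.rpow_neg_one (r^(1/s)), ← Real.rpow_mul hr.le]
      ring_nf
    rw [h4]
    have hrs : 0 < r^(1/s) := Real.rpow_pos_of_pos hr _
    rw [show (4:ℝ) = (4⁻¹)⁻¹ by norm_num]
    exact inv_strictAnti₀ hrs h3
  set M : ℕ := ⌊B/2⌋₊ with hM
  have hM2 : 2 ≤ M := by
    rw [hM]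
    apply Nat.le_floor
    push_cast
    linarith
  have hMreal : (2:ℝ) ≤ M := by exact_mod_cast hM2
  have hMpos : (0:ℝ) < M := by linarith
  have hMleB : 2 * (M:ℝ) ≤ B := by
    have := Nat.floor_le (le_of_lt (by linarith : (0:ℝ) < B/2))
    rw [← hM] at this
    linarith
  have hMgeB : B/4 ≤ (M:ℝ) := by
    have := Nat.sub_one_lt_floor (B/2)
    rw [← hM] at this
    linarith
  set F : Finset ℕ := Finset.Ico (M-1) (2*M-1) with hF
  have hcard : F.card = M := by
    rw [hF, Nat.card_Ico]
    omega
  set θ : ℕ → ℝ := fun j => if j ∈ F then r / Real.sqrt M else 0 with hθ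
  have hθzero : ∀ j ∉ F, θ j = 0 := fun j hj => by simp [hθ, hj]
  have hθval : ∀ j ∈ F, (θ j)^2 = r^2 / M := by
    intro j hj
    rw [hθ]
    simp only [hj, if_pos]
    rw [div_pow, Real.sq_sqrt hMpos.le]
  have hθval4 : ∀ j ∈ F, (θ j)^4 = r^4 / (M:ℝ)^2 := by
    intro j hj
    rw [hθ]
    simp only [hj, if_pos]
    rw [div_pow]
    congr 1
    rw [show (4:ℕ) = 2*2 by norm_num, pow_mul, Real.sq_sqrt hMpos.le]
  -- facts about indices in F
  have hidx : ∀ j ∈ F, (M:ℝ) ≤ (j:ℝ)+1 ∧ (j:ℝ)+1 ≤ B := by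
    intro j hj
    rw [hF, Finset.mem_Ico] at hj
    obtain ⟨h1, h2⟩ := hj
    constructor
    · have : M ≤ j + 1 := by omega
      exact_mod_cast this
    · have : j + 1 ≤ 2*M := by omega
      have h3 : (j:ℝ)+1 ≤ 2*(M:ℝ) := by exact_mod_cast this
      linarith
  -- summability
  have hs2 : Summable (fun j : ℕ => (θ j)^2) :=
    summable_of_ne_finset_zero (s := F) (fun j hj => by rw [hθzero j hj]; ring)
  have hsw : Summable (fun j : ℕ => ((j:ℝ)+1)^(2*s) * (θ j)^2) :=
    summable_of_ne_finset_zero (s := F) (fun j hj => by rw [hθzero j hj]; ring)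
  have hsq : Summable (fun j : ℕ => ((j:ℝ)+1)^(-(4*t)) * (θ j)^4) :=
    summable_of_ne_finset_zero (s := F) (fun j hj => by rw [hθzero j hj]; ring)
  -- tsum θ^2 = r^2
  have ht2 : (∑' j : ℕ, (θ j)^2) = r^2 := by
    rw [tsum_eq_sum (s := F) (fun j hj => by rw [hθzero j hj]; ring)]
    rw [Finset.sum_congr rfl hθval, Finset.sum_const, hcard, nsmul_eq_mul]
    field_simp
  -- B^(2s) = r^(-2)
  have hB2s : B^(2*s) = r^(-(2:ℝ)) := by
    rw [hB, ← Real.rpow_mul hr.le]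
    congr 1
    field_simp
  -- weighted sum ≤ 1
  have htw : (∑' j : ℕ, ((j:ℝ)+1)^(2*s) * (θ j)^2) ≤ 1 := by
    rw [tsum_eq_sum (s := F) (fun j hj => by rw [hθzero j hj]; ring)]
    have hbound : ∀ j ∈ F, ((j:ℝ)+1)^(2*s) * (θ j)^2 ≤ 1/(M:ℝ) := by
      intro j hj
      obtain ⟨_, h2⟩ := hidx j hj
      have hle : ((j:ℝ)+1)^(2*s) ≤ B^(2*s) :=
        Real.rpow_le_rpow (by positivity) h2 (by positivity)
      rw [hθval j hj]
      calc ((j:ℝ)+1)^(2*s) * (r^2/M) ≤ B^(2*s) * (r^2/M) := by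
            apply mul_le_mul_of_nonneg_right hle (by positivity)
      _ = r^(-(2:ℝ)) * r^2 / M := by rw [hB2s]; ring
      _ = 1/(M:ℝ) := by
            rw [Real.rpow_neg hr.le, Real.rpow_two]
            field_simp
    calc (∑ j ∈ F, ((j:ℝ)+1)^(2*s) * (θ j)^2) ≤ ∑ _j ∈ F, 1/(M:ℝ) :=
          Finset.sum_le_sum hbound
    _ = M * (1/(M:ℝ)) := by rw [Finset.sum_const, hcard, nsmul_eq_mul]
    _ = 1 := by field_simp
  -- quartic sum bound
  have htq : (∑' j : ℕ, ((j:ℝ)+1)^(-(4*t)) * (θ j)^4) ≤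
      (4:ℝ)^(4*t+1) * r ^ ((4*s+4*t+1)/s) := by
    rw [tsum_eq_sum (s := F) (fun j hj => by rw [hθzero j hj]; ring)]
    have hbound : ∀ j ∈ F, ((j:ℝ)+1)^(-(4*t)) * (θ j)^4 ≤
        (M:ℝ)^(-(4*t)) * (r^4 / (M:ℝ)^2) := by
      intro j hj
      obtain ⟨h1, _⟩ := hidx j hj
      have hle : ((j:ℝ)+1)^(-(4*t)) ≤ (M:ℝ)^(-(4*t)) :=
        Real.rpow_le_rpow_of_nonpos hMpos h1 (by linarith)
      rw [hθval4 j hj]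
      apply mul_le_mul_of_nonneg_right hle (by positivity)
    have hMpow : (M:ℝ) * ((M:ℝ)^(-(4*t)) * (r^4 / (M:ℝ)^2)) =
        r^4 * (M:ℝ)^(-(4*t+1)) := by
      rw [Real.rpow_neg hMpos.le, Real.rpow_neg hMpos.le,
        Real.rpow_add hMpos, Real.rpow_one]
      have h40 : (0:ℝ) < (M:ℝ)^(4*t) := Real.rpow_pos_of_pos hMpos _
      field_simp
    have hMup : (M:ℝ)^(-(4*t+1)) ≤ (4:ℝ)^(4*t+1) * r^((4*t+1)/s) := by
      have h1 : (M:ℝ)^(-(4*t+1)) ≤ (B/4)^(-(4*t+1)) :=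
        Real.rpow_le_rpow_of_nonpos (by linarith) hMgeB (by linarith)
      have h2 : (B/4)^(-(4*t+1)) = (4:ℝ)^(4*t+1) * B^(-(4*t+1)) := by
        rw [Real.div_rpow hBpos.le (by norm_num), Real.rpow_neg (by norm_num : (0:ℝ) ≤ 4),
          div_eq_mul_inv, inv_inv]
        ring
      have h3 : B^(-(4*t+1)) = r^((4*t+1)/s) := by
        rw [hB, ← Real.rpow_mul hr.le]
        congr 1
        field_simp
      rw [h2, h3] at h1
      exact h1
    have hexp : r ^ ((4*s+4*t+1)/s) = r^4 * r^((4*t+1)/s) := by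
      have e3 : r^(4:ℝ) = r^4 := by
        rw [← Real.rpow_natCast r 4]; norm_num
      rw [← e3, ← Real.rpow_add hr]
      congr 1
      field_simp
      ring
    calc (∑ j ∈ F, ((j:ℝ)+1)^(-(4*t)) * (θ j)^4)
        ≤ ∑ _j ∈ F, (M:ℝ)^(-(4*t)) * (r^4 / (M:ℝ)^2) := Finset.sum_le_sum hbound
    _ = (M:ℝ) * ((M:ℝ)^(-(4*t)) * (r^4 / (M:ℝ)^2)) := by
        rw [Finset.sum_const, hcard, nsmul_eq_mul]
    _ = r^4 * (M:ℝ)^(-(4*t+1)) := hMpow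
    _ ≤ r^4 * ((4:ℝ)^(4*t+1) * r^((4*t+1)/s)) := by
        apply mul_le_mul_of_nonneg_left hMup (by positivity)
    _ = (4:ℝ)^(4*t+1) * r ^ ((4*s+4*t+1)/s) := by rw [hexp]; ring
  exact ⟨θ, hs2, hsw, htw, ht2.ge.trans_eq rfl, htq⟩

/-- In the mildly ill-posed setting a_j = j^s, b_j = j^{-t} (coordinates indexed by j ≥ 1),
the extremal quantity u_ε²(r) = inf_{θ ∈ Θ_a(r)} (1/(2ε⁴)) ∑_j b_j⁴θ_j⁴ satisfies
u_ε²(r) ≍ ε^{-4} r^{(4s+4t+1)/s} as r → 0, uniformly in ε; consequently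
u_ε(r_ε) = O(1) iff r_ε = O(ε^{2s/(2s+2t+1/2)}). -/
theorem stmt_14 (s t : ℝ) (hs : 0 < s) (ht : 0 < t) :
    ∃ κ₀ κ₁ r₀ : ℝ, 0 < κ₀ ∧ κ₀ ≤ κ₁ ∧ 0 < r₀ ∧
      ∀ ε r : ℝ, 0 < ε → 0 < r → r < r₀ →
        κ₀ * (ε^4)⁻¹ * r ^ ((4*s+4*t+1)/s) ≤
          sInf {x : ℝ | ∃ θ : ℕ → ℝ,
            Summable (fun j : ℕ => (θ j)^2) ∧
            Summable (fun j : ℕ => ((j:ℝ)+1)^(2*s) * (θ j)^2) ∧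
            (∑' j : ℕ, ((j:ℝ)+1)^(2*s) * (θ j)^2) ≤ 1 ∧
            r^2 ≤ (∑' j : ℕ, (θ j)^2) ∧
            x = (1/(2*ε^4)) * ∑' j : ℕ, ((j:ℝ)+1)^(-(4*t)) * (θ j)^4} ∧
        sInf {x : ℝ | ∃ θ : ℕ → ℝ,
            Summable (fun j : ℕ => (θ j)^2) ∧
            Summable (fun j : ℕ => ((j:ℝ)+1)^(2*s) * (θ j)^2) ∧
            (∑' j : ℕ, ((j:ℝ)+1)^(2*s) * (θ j)^2) ≤ 1 ∧
            r^2 ≤ (∑' j : ℕ, (θ j)^2) ∧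
            x = (1/(2*ε^4)) * ∑' j : ℕ, ((j:ℝ)+1)^(-(4*t)) * (θ j)^4}
          ≤ κ₁ * (ε^4)⁻¹ * r ^ ((4*s+4*t+1)/s) := by
  obtain ⟨c, hc, hlow⟩ := aux_lower s t hs ht
  obtain ⟨C, hC, hupp⟩ := aux_upper s t hs ht
  have h4s1 : (4:ℝ)^(-s) < 1 := by
    rw [show (1:ℝ) = (4:ℝ)^(0:ℝ) from (Real.rpow_zero 4).symm]
    exact Real.rpow_lt_rpow_of_exponent_lt (by norm_num) (by linarith)
  refine ⟨c/2, max (c/2) (C/2), (4:ℝ)^(-s), by positivity, le_max_left _ _, by positivity, ?_⟩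
  intro ε r hε hr hrr
  have hr1 : r < 1 := lt_trans hrr h4s1
  obtain ⟨θ₀, hu1, hu2, hu3, hu4, hu5⟩ := hupp r hr hrr
  set S : Set ℝ := {x : ℝ | ∃ θ : ℕ → ℝ,
            Summable (fun j : ℕ => (θ j)^2) ∧
            Summable (fun j : ℕ => ((j:ℝ)+1)^(2*s) * (θ j)^2) ∧
            (∑' j : ℕ, ((j:ℝ)+1)^(2*s) * (θ j)^2) ≤ 1 ∧
            r^2 ≤ (∑' j : ℕ, (θ j)^2) ∧
            x = (1/(2*ε^4)) * ∑' j : ℕ, ((j:ℝ)+1)^(-(4*t)) * (θ j)^4} with hS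
  have hmem : (1/(2*ε^4)) * (∑' j : ℕ, ((j:ℝ)+1)^(-(4*t)) * (θ₀ j)^4) ∈ S :=
    ⟨θ₀, hu1, hu2, hu3, hu4, rfl⟩
  have hbdd : BddBelow S := by
    refine ⟨0, fun x hx => ?_⟩
    obtain ⟨θ, _, _, _, _, hxeq⟩ := hx
    rw [hxeq]
    have : 0 ≤ ∑' j : ℕ, ((j:ℝ)+1)^(-(4*t)) * (θ j)^4 :=
      tsum_nonneg (fun j => by positivity)
    positivity
  constructor
  · apply le_csInf ⟨_, hmem⟩
    rintro x ⟨θ, a1, a2, a3, a4, rfl⟩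
    have hkey := hlow r hr hr1 θ a1 a2 a3 a4
    calc c/2 * (ε^4)⁻¹ * r ^ ((4*s+4*t+1)/s)
        = (1/(2*ε^4)) * (c * r ^ ((4*s+4*t+1)/s)) := by ring
    _ ≤ (1/(2*ε^4)) * ∑' j : ℕ, ((j:ℝ)+1)^(-(4*t)) * (θ j)^4 := by
        apply mul_le_mul_of_nonneg_left hkey (by positivity)
  · calc sInf S ≤ (1/(2*ε^4)) * (∑' j : ℕ, ((j:ℝ)+1)^(-(4*t)) * (θ₀ j)^4) :=
        csInf_le hbdd hmem
    _ ≤ (1/(2*ε^4)) * (C * r ^ ((4*s+4*t+1)/s)) := by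
        apply mul_le_mul_of_nonneg_left hu5 (by positivity)
    _ = C/2 * (ε^4)⁻¹ * r ^ ((4*s+4*t+1)/s) := by ring
    _ ≤ max (c/2) (C/2) * (ε^4)⁻¹ * r ^ ((4*s+4*t+1)/s) := by
        apply mul_le_mul_of_nonneg_right ?_ (by positivity)
        apply mul_le_mul_of_nonneg_right (le_max_right _ _) (by positivity)
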